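/- Let B be an infinite set of positive integers. Then the interior of the window W in H is empty if and only if the subshift (X_η, σ) is proximal, i.e., for every pair x, y ∈ X_η and every ε > 0 (with respect to a compatible metric on {0,1}^ℤ) there exists n ∈ ℤ with dist(σⁿx, σⁿy) < ε. -/

import Mathlib

open Set MeasureTheory Filter Topology

namespace BFree

/-- The ambient compact group `∏_{b ∈ B} ℤ/bℤ`. -/
abbrev Gspace (B : Set ℕ+) : Type := ∀ b : B, ZMod ((b : ℕ+) : ℕ)

/-- The diagonal embedding `Δ : ℤ → ∏_{b ∈ B} ℤ/bℤ`. -/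
def delta (B : Set ℕ+) : ℤ →+ Gspace B where
  toFun n := fun b => (n : ZMod ((b : ℕ+) : ℕ))
  map_zero' := by funext b; simp
  map_add' m n := by funext b; simp

/-- `H`, the closure of `Δ(ℤ)`, as a (closed) subgroup of `Gspace B`. -/
def Hgrp (B : Set ℕ+) : AddSubgroup (Gspace B) :=
  (delta B).range.topologicalClosure

/-- `H` as a compact topological group. -/
abbrev Hspace (B : Set ℕ+) : Type := ↥(Hgrp B)

instance (B : Set ℕ+) : CompactSpace (Hspace B) :=
  isCompact_iff_compactSpace.mp
    (IsClosed.isCompact (AddSubgroup.isClosed_topologicalClosure _))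

instance (B : Set ℕ+) : BorelSpace (Hspace B) := Subtype.borelSpace _

/-- The window `W = {h ∈ H : h_b ≠ 0 for all b ∈ B}`. -/
def window (B : Set ℕ+) : Set (Hspace B) :=
  {h | ∀ b : B, (h : Gspace B) b ≠ 0}

/-- `Δ(n)` as an element of `H`. -/
def deltaH (B : Set ℕ+) (n : ℤ) : Hspace B :=
  ⟨delta B n, (delta B).range.le_topologicalClosure ⟨n, rfl⟩⟩

/-- The set of multiples `M_B ⊆ ℤ` of a set `B` of positive integers. -/
def MultSet (B : Set ℕ+) : Set ℤ := {n | ∃ b ∈ B, ((b : ℕ) : ℤ) ∣ n}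

/-- The `B`-free set `F_B = ℤ ∖ M_B`. -/
def FreeSet (B : Set ℕ+) : Set ℤ := {n | ∀ b ∈ B, ¬ ((b : ℕ) : ℤ) ∣ n}

/-- Set of multiples of a set of natural numbers. -/
def MultSetN (C : Set ℕ) : Set ℤ := {n | ∃ c ∈ C, (c : ℤ) ∣ n}

/-- Free set of a set of natural numbers. -/
def FreeSetN (C : Set ℕ) : Set ℤ := {n | ∀ c ∈ C, ¬ (c : ℤ) ∣ n}

/-- `#(M ∩ [1, N]) / N`. -/
noncomputable def densSeq (M : Set ℤ) (N : ℕ) : ℝ :=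
  (Nat.card ↥(M ∩ Set.Icc (1 : ℤ) (N : ℤ)) : ℝ) / N

/-- Lower (asymptotic) density of a set of integers. -/
noncomputable def lowerDensity (M : Set ℤ) : ℝ := Filter.liminf (densSeq M) Filter.atTop

/-- Upper (asymptotic) density of a set of integers. -/
noncomputable def upperDensity (M : Set ℤ) : ℝ := Filter.limsup (densSeq M) Filter.atTop

/-- `B` is taut if removing any element strictly decreases the lower density
of the set of multiples. -/
def Taut (B : Set ℕ+) : Prop :=
  ∀ b ∈ B, lowerDensity (MultSet (B \ {b})) < lowerDensity (MultSet B)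

/-- `B` is primitive if no element divides another. -/
def Primitive (B : Set ℕ+) : Prop :=
  ∀ b ∈ B, ∀ b' ∈ B, (b : ℕ) ∣ (b' : ℕ) → b = b'

/-- `lcm(S)` for a finite set of positive integers. -/
def lcmS (S : Finset ℕ+) : ℕ := S.lcm fun b => (b : ℕ)

/-- `A_S = {gcd(b, lcm S) : b ∈ B}`. -/
def ASet (B : Set ℕ+) (S : Finset ℕ+) : Set ℕ :=
  {m | ∃ b ∈ B, m = Nat.gcd (b : ℕ) (lcmS S)}

/-- The cylinder set `U_S(h) ⊆ H`. -/
def cyl (B : Set ℕ+) (S : Finset ℕ+) (hS : ↑S ⊆ B) (h : Hspace B) : Set (Hspace B) :=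
  {h' | ∀ b, ∀ hb : b ∈ S, (h' : Gspace B) ⟨b, hS hb⟩ = (h : Gspace B) ⟨b, hS hb⟩}

/-- `E = ⋃_{S ⊆ B finite} F_{A_S}`. -/
def Eset (B : Set ℕ+) : Set ℤ :=
  ⋃ (S : Finset ℕ+) (_ : ↑S ⊆ B), FreeSetN (ASet B S)

/-- `A_∞`. -/
def Ainfty (B : Set ℕ+) : Set ℕ :=
  {n | ∀ S : Finset ℕ+, ↑S ⊆ B →
    ∃ S' : Finset ℕ+, S ⊆ S' ∧ ↑S' ⊆ B ∧ n ∈ ASet B S' ∧ ∀ b ∈ S', (b : ℕ) ≠ n}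

/-- The indicator `η` of the `B`-free set, as a point of `{0,1}^ℤ`. -/
noncomputable def eta (B : Set ℕ+) : ℤ → Bool :=
  fun n => @decide (n ∈ FreeSet B) (Classical.propDecidable _)

/-- The left shift on `{0,1}^ℤ`, iterated `k` times (`k ∈ ℤ`). -/
def shift (k : ℤ) (x : ℤ → Bool) : ℤ → Bool := fun n => x (n + k)

/-- The orbit closure `X_η` of `η` in `{0,1}^ℤ`. -/
noncomputable def Xeta (B : Set ℕ+) : Set (ℤ → Bool) :=
  closure {x | ∃ k : ℤ, x = shift k (eta B)}

/-!
Both sides are equivalent to the arithmetic condition that every finite `S ⊆ B` admits some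
`c ∈ B` coprime to `lcm S`.

If it holds, any cylinder `U_S(h)` contains some `Δ(n)`, hence by the Chinese remainder theorem
some `Δ(m)` with `c ∣ m`, which lies outside `W`. If `S` violates it, then `U_S(Δ(1)) ⊆ W`, since
an `n ≡ 1 mod lcm S` has no divisor in `B`.

Every point of `X_η` vanishes on a residue class modulo each `b ∈ B`. Under the condition, each of
the finitely many requirements `σᵏx (m) = 0`, `σᵏy (m) = 0` (`|m| ≤ N`) can be met modulo a fresh
element of `B` coprime to the moduli used so far, and the Chinese remainder theorem combines them
into a single `k`. If `S` violates it, `η` vanishes on `lcm(S) ℤ` and is `1` on `1 + lcm(S) ℤ`,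
so no shift brings `η` and `σ η` together on `[-lcm S, lcm S]`.
-/

def CoprimeExtensible (B : Set ℕ+) : Prop :=
  ∀ S : Finset ℕ+, ↑S ⊆ B → ∃ c ∈ B, IsCoprime ((c : ℕ) : ℤ) (lcmS S : ℤ)

lemma _root_.IsCoprime.exists_dvd_sub_and_dvd_sub {R : Type*} [CommRing R] {a b : R}
    (h : IsCoprime a b) (x y : R) : ∃ m, a ∣ m - x ∧ b ∣ m - y := by
  obtain ⟨u, v, huv⟩ := h
  exact ⟨x * v * b + y * u * a, ⟨(y - x) * u, by linear_combination x * huv⟩,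
    ⟨(x - y) * v, by linear_combination y * huv⟩⟩

lemma _root_.isCoprime_of_dvd_of_dvd_sub_one {R : Type*} [CommRing R] {a b n : R}
    (ha : a ∣ n) (hb : b ∣ n - 1) : IsCoprime a b := by
  obtain ⟨p, rfl⟩ := ha
  obtain ⟨q, hq⟩ := hb
  exact ⟨p, -q, by linear_combination hq⟩

lemma natCast_dvd_lcmS {S : Finset ℕ+} {b : ℕ+} (hb : b ∈ S) : ((b : ℕ) : ℤ) ∣ (lcmS S : ℤ) :=
  Int.natCast_dvd_natCast.2 (Finset.dvd_lcm hb)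

lemma natCast_lcmS_dvd_lcmS {S S' : Finset ℕ+} (h : S ⊆ S') : (lcmS S : ℤ) ∣ (lcmS S' : ℤ) :=
  Int.natCast_dvd_natCast.2 (Finset.lcm_mono h)

lemma natCast_lcmS_dvd_iff {S : Finset ℕ+} {n : ℤ} :
    (lcmS S : ℤ) ∣ n ↔ ∀ b ∈ S, ((b : ℕ) : ℤ) ∣ n := by
  simp only [Int.natCast_dvd, lcmS, Finset.lcm_dvd_iff]

section Window

variable {B : Set ℕ+}

lemma denseRange_deltaH : DenseRange (deltaH B) := by
  refine Topology.IsInducing.subtypeVal.dense_iff.2 fun h => ?_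
  rw [← Set.range_comp]
  exact h.2

lemma isOpen_cyl (S : Finset ℕ+) (hS : ↑S ⊆ B) (h : Hspace B) : IsOpen (cyl B S hS h) := by
  have hcyl : cyl B S hS h = ⋂ b : S, (fun g : Hspace B => (g : Gspace B) ⟨b, hS b.2⟩) ⁻¹'
      {(h : Gspace B) ⟨b, hS b.2⟩} := by
    ext; simp [cyl]
  rw [hcyl]
  exact isOpen_iInter_of_finite fun b =>
    (isOpen_discrete _).preimage ((continuous_apply _).comp continuous_subtype_val)

lemma mem_cyl_self (S : Finset ℕ+) (hS : ↑S ⊆ B) (h : Hspace B) : h ∈ cyl B S hS h :=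
  fun _ _ => rfl

lemma cyl_eq_of_mem {S : Finset ℕ+} {hS : ↑S ⊆ B} {h h' : Hspace B} (hh' : h' ∈ cyl B S hS h) :
    cyl B S hS h' = cyl B S hS h := by
  ext g
  exact forall₂_congr fun b hb => by rw [hh' b hb]

lemma cyl_subset_cyl {S S' : Finset ℕ+} {hS : ↑S ⊆ B} {hS' : ↑S' ⊆ B} (h : Hspace B)
    (hSS' : S ⊆ S') : cyl B S' hS' h ⊆ cyl B S hS h :=
  fun _ hg b hb => hg b (hSS' hb)

lemma mem_interior_iff_exists_cyl_subset {s : Set (Hspace B)} {h : Hspace B} :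
    h ∈ interior s ↔ ∃ (S : Finset ℕ+) (hS : ↑S ⊆ B), cyl B S hS h ⊆ s := by
  refine ⟨fun hh => ?_, fun ⟨S, hS, hsub⟩ =>
    interior_maximal hsub (isOpen_cyl S hS h) (mem_cyl_self S hS h)⟩
  rw [mem_interior_iff_mem_nhds, nhds_subtype, Filter.mem_comap] at hh
  obtain ⟨t, ht, hts⟩ := hh
  rw [nhds_pi, Filter.mem_pi'] at ht
  obtain ⟨I, u, hu, hIu⟩ := ht
  refine ⟨I.map (Function.Embedding.subtype _), fun b hb => ?_,
    fun g hg => hts (hIu fun i hi => ?_)⟩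
  · obtain ⟨i, -, rfl⟩ := Finset.mem_map.1 hb
    exact i.2
  · rw [show (g : Gspace B) i = (h : Gspace B) i from hg i (Finset.mem_map_of_mem _ hi)]
    exact mem_of_mem_nhds (hu i)

lemma exists_deltaH_mem_cyl (S : Finset ℕ+) (hS : ↑S ⊆ B) (h : Hspace B) :
    ∃ n, deltaH B n ∈ cyl B S hS h :=
  denseRange_deltaH.exists_mem_open (isOpen_cyl S hS h) ⟨h, mem_cyl_self S hS h⟩

lemma deltaH_mem_cyl_iff {S : Finset ℕ+} {hS : ↑S ⊆ B} {m n : ℤ} :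
    deltaH B m ∈ cyl B S hS (deltaH B n) ↔ (lcmS S : ℤ) ∣ m - n := by
  rw [natCast_lcmS_dvd_iff]
  refine forall₂_congr fun b _ => ?_
  rw [← dvd_neg, neg_sub]
  exact ZMod.intCast_eq_intCast_iff_dvd_sub _ _ _

lemma interior_window_eq_empty_of_coprimeExtensible (hB : CoprimeExtensible B) :
    interior (window B) = ∅ := by
  refine eq_empty_iff_forall_notMem.2 fun h hh => ?_
  obtain ⟨S, hS, hsub⟩ := mem_interior_iff_exists_cyl_subset.1 hh
  obtain ⟨n, hn⟩ := exists_deltaH_mem_cyl S hS h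
  obtain ⟨c, hc, hcop⟩ := hB S hS
  obtain ⟨m, hcm, hLm⟩ := hcop.exists_dvd_sub_and_dvd_sub 0 n
  have hm : deltaH B m ∈ window B :=
    hsub (cyl_eq_of_mem hn ▸ deltaH_mem_cyl_iff.2 hLm)
  exact hm ⟨c, hc⟩ ((ZMod.intCast_zmod_eq_zero_iff_dvd _ _).2 (by simpa using hcm))

lemma coprimeExtensible_of_interior_window_eq_empty (h : interior (window B) = ∅) :
    CoprimeExtensible B := by
  by_contra hB
  obtain ⟨S, hS, hnc⟩ : ∃ S : Finset ℕ+, ∃ hS : ↑S ⊆ B,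
      ∀ c ∈ B, ¬IsCoprime ((c : ℕ) : ℤ) (lcmS S : ℤ) := by
    simpa [CoprimeExtensible] using hB
  refine eq_empty_iff_forall_notMem.1 h (deltaH B 1)
    (mem_interior_iff_exists_cyl_subset.2 ⟨S, hS, fun g hg b hb => ?_⟩)
  obtain ⟨n, hn⟩ := exists_deltaH_mem_cyl (insert b.1 S)
    (Finset.coe_insert b.1 S ▸ Set.insert_subset b.2 hS) g
  have hL : (lcmS S : ℤ) ∣ n - 1 :=
    deltaH_mem_cyl_iff.1 (cyl_eq_of_mem hg ▸ cyl_subset_cyl g (Finset.subset_insert _ _) hn)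
  have hbn : ((b : ℕ) : ℤ) ∣ n := by
    rw [← ZMod.intCast_zmod_eq_zero_iff_dvd, ← hb]
    exact hn b (Finset.mem_insert_self _ _)
  exact hnc b b.2 (isCoprime_of_dvd_of_dvd_sub_one hbn hL)

lemma interior_window_eq_empty_iff : interior (window B) = ∅ ↔ CoprimeExtensible B :=
  ⟨coprimeExtensible_of_interior_window_eq_empty, interior_window_eq_empty_of_coprimeExtensible⟩

end Window

section Subshift

variable {B : Set ℕ+}

lemma eta_eq_false_of_dvd {b : ℕ+} (hb : b ∈ B) {n : ℤ} (h : ((b : ℕ) : ℤ) ∣ n) :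
    eta B n = false := by
  have hn : n ∉ FreeSet B := fun hn => hn b hb h
  simpa [eta] using hn

lemma eta_eq_true_iff {n : ℤ} : eta B n = true ↔ n ∈ FreeSet B := by
  simp [eta]

lemma shift_eta_mem_Xeta (k : ℤ) : shift k (eta B) ∈ Xeta B :=
  subset_closure ⟨k, rfl⟩

/-- The points vanishing on some residue class modulo `b` form a closed set (a finite union over
the residues) containing the orbit of `η`. -/
lemma exists_residueClass_eq_false {x : ℤ → Bool} (hx : x ∈ Xeta B) {b : ℕ+} (hb : b ∈ B) :
    ∃ r : ℤ, ∀ n, ((b : ℕ) : ℤ) ∣ n - r → x n = false := by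
  let C : Set (ℤ → Bool) :=
    ⋃ r : ZMod (b : ℕ), ⋂ n : ℤ, ⋂ (_ : (n : ZMod (b : ℕ)) = r), {z | z n = false}
  have hC : IsClosed C := isClosed_iUnion_of_finite fun r => isClosed_iInter fun n =>
    isClosed_iInter fun _ => isClosed_eq (continuous_apply n) continuous_const
  have horbit : {z | ∃ k : ℤ, z = shift k (eta B)} ⊆ C := by
    rintro _ ⟨k, rfl⟩
    refine mem_iUnion.2 ⟨((-k : ℤ) : ZMod (b : ℕ)), mem_iInter₂.2 fun n hn => ?_⟩
    refine eta_eq_false_of_dvd hb ?_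
    simpa using (ZMod.intCast_eq_intCast_iff_dvd_sub _ _ _).1 hn.symm
  obtain ⟨r, hr⟩ := mem_iUnion.1 (closure_minimal horbit hC hx)
  obtain ⟨r, rfl⟩ := ZMod.intCast_surjective r
  refine ⟨r, fun n hn => mem_iInter₂.1 hr n ?_⟩
  exact ((ZMod.intCast_eq_intCast_iff_dvd_sub _ _ _).2 hn).symm

/-- By induction on `F`: each new set is handled by adjoining to `S` some `c ∈ B` coprime to
`lcm S` and solving the Chinese remainder problem modulo `c` and `lcm S`. -/
lemma exists_residueClass_subset_of_coprimeExtensible (hB : CoprimeExtensible B) {ι : Type*}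
    (F : Finset ι) (Z : ι → Set ℤ)
    (hZ : ∀ i ∈ F, ∀ b ∈ B, ∃ r : ℤ, {n | ((b : ℕ) : ℤ) ∣ n - r} ⊆ Z i) :
    ∃ S : Finset ℕ+, ↑S ⊆ B ∧ ∃ k : ℤ, ∀ i ∈ F, {n | (lcmS S : ℤ) ∣ n - k} ⊆ Z i := by
  classical
  induction F using Finset.induction_on with
  | empty => exact ⟨∅, by simp, 0, by simp⟩
  | @insert i F _ ih =>
    obtain ⟨S, hS, k, hk⟩ := ih fun j hj => hZ j (Finset.mem_insert_of_mem hj)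
    obtain ⟨c, hc, hcop⟩ := hB S hS
    obtain ⟨r, hr⟩ := hZ i (Finset.mem_insert_self i F) c hc
    obtain ⟨k', hck', hLk'⟩ := hcop.exists_dvd_sub_and_dvd_sub r k
    refine ⟨insert c S, Finset.coe_insert c S ▸ Set.insert_subset hc hS, k',
      fun j hj n hn => ?_⟩
    rcases Finset.mem_insert.1 hj with rfl | hj
    · refine hr ?_
      simpa using (natCast_dvd_lcmS (Finset.mem_insert_self c S)).trans hn |>.add hck'
    · refine hk j hj ?_
      simpa using (natCast_lcmS_dvd_lcmS (Finset.subset_insert c S)).trans hn |>.add hLk'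

lemma proximal_of_coprimeExtensible (hB : CoprimeExtensible B) :
    ∀ x ∈ Xeta B, ∀ y ∈ Xeta B, ∀ N : ℕ, ∃ k : ℤ,
      ∀ m : ℤ, |m| ≤ (N : ℤ) → shift k x m = shift k y m := by
  classical
  intro x hx y hy N
  have hZ : ∀ p ∈ ({x, y} : Finset (ℤ → Bool)) ×ˢ Finset.Icc (-(N : ℤ)) N, ∀ b ∈ B,
      ∃ r : ℤ, {n | ((b : ℕ) : ℤ) ∣ n - r} ⊆ {k | shift k p.1 p.2 = false} := by
    rintro ⟨z, m⟩ hp b hb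
    have hz : z ∈ Xeta B := by
      simp only [Finset.mem_product, Finset.mem_insert, Finset.mem_singleton] at hp
      rcases hp.1 with rfl | rfl <;> assumption
    obtain ⟨r, hr⟩ := exists_residueClass_eq_false hz hb
    exact ⟨r - m, fun n hn => hr _ (by rw [show m + n - r = n - (r - m) by ring]; exact hn)⟩
  obtain ⟨S, -, k, hk⟩ := exists_residueClass_subset_of_coprimeExtensible hB _ _ hZ
  have hkk : k ∈ {n | (lcmS S : ℤ) ∣ n - k} := by simp
  refine ⟨k, fun m hm => ?_⟩
  have hm' : m ∈ Finset.Icc (-(N : ℤ)) N := Finset.mem_Icc.2 (abs_le.1 hm)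
  rw [hk (x, m) (by simp [hm']) hkk, hk (y, m) (by simp [hm']) hkk]

lemma coprimeExtensible_of_proximal (hB : B.Nonempty)
    (hprox : ∀ x ∈ Xeta B, ∀ y ∈ Xeta B, ∀ N : ℕ, ∃ k : ℤ,
      ∀ m : ℤ, |m| ≤ (N : ℤ) → shift k x m = shift k y m) :
    CoprimeExtensible B := by
  intro S hS
  by_contra! hnc
  obtain ⟨b, hb⟩ : S.Nonempty := by
    refine Finset.nonempty_iff_ne_empty.2 fun hS₀ => ?_
    obtain ⟨c, hc⟩ := hB
    exact hnc c hc (by simp [hS₀, lcmS, isCoprime_one_right])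
  set L : ℤ := (lcmS S : ℤ)
  have hL : 0 < L :=
    Int.natCast_pos.2 (Nat.pos_of_ne_zero (by simp [lcmS, Finset.lcm_eq_zero_iff]))
  have hzero : ∀ n, L ∣ n → eta B n = false := fun n hn =>
    eta_eq_false_of_dvd (hS hb) ((natCast_dvd_lcmS hb).trans hn)
  have hone : ∀ n, L ∣ n - 1 → eta B n = true := fun n hn => eta_eq_true_iff.2
    fun c hc hcn => hnc c hc (isCoprime_of_dvd_of_dvd_sub_one hcn hn)
  obtain ⟨k, hk⟩ := hprox _ (shift_eta_mem_Xeta 0) _ (shift_eta_mem_Xeta 1) (lcmS S)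
  have hkL : L ∣ -(k % L) + k := ⟨k / L, by rw [Int.emod_def]; ring⟩
  have h := hk (-(k % L)) (by
    rw [abs_neg, abs_of_nonneg (Int.emod_nonneg k hL.ne')]
    exact (Int.emod_lt_of_pos k hL).le)
  simp only [shift, add_zero] at h
  rw [hzero _ hkL, hone _ (by simpa using hkL)] at h
  exact Bool.false_ne_true h

end Subshift

/-- For an infinite set `B` of positive integers, `int(W) = ∅` iff the subshift
`(X_η, σ)` is proximal: for all `x, y ∈ X_η` and every `ε > 0` (equivalently, every finite
window `[-N, N]` for the standard compatible metric on `{0,1}^ℤ`) there is `k ∈ ℤ` such that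
`σᵏx` and `σᵏy` agree on `[-N, N]`. -/
theorem statement8 (B : Set ℕ+) (hB : B.Infinite) :
    interior (window B) = ∅ ↔
      ∀ x ∈ Xeta B, ∀ y ∈ Xeta B, ∀ N : ℕ, ∃ k : ℤ,
        ∀ m : ℤ, |m| ≤ (N : ℤ) → shift k x m = shift k y m := by
  rw [interior_window_eq_empty_iff]
  exact ⟨proximal_of_coprimeExtensible, coprimeExtensible_of_proximal hB.nonempty⟩

end BFree
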